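/- arXiv:2409.01951 — 2 statements merged into one kernel-verified Lean document; each statement's English description precedes it below -/
import Mathlib

section
/- Let u ∈ Mat_N(ℂ) be a unitary matrix. The following are equivalent: (1) for every diagonal matrix d, the diagonal part of u d u* equals (tr d)·I_N, where tr is the normalized trace; (2) |u_{ij}|² = 1/N for all i, j. That is, the square of diagonal algebras ℂ^N and uℂ^Nu* inside Mat_N(ℂ) is a commuting square if and only if u is a complex Hadamard matrix (up to normalization). -/
open Matrix

theorem Matrix.mul_diagonal_mul_conjTranspose_apply_self {ι 𝕜 : Type*} [Fintype ι]
    [DecidableEq ι] [RCLike 𝕜] (A : Matrix ι ι 𝕜) (d : ι → 𝕜) (i : ι) :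
    (A * diagonal d * Aᴴ) i i = ∑ k, d k * ((‖A i k‖ ^ 2 : ℝ) : 𝕜) := by
  rw [mul_apply]
  refine Finset.sum_congr rfl fun k _ => ?_
  rw [mul_diagonal, conjTranspose_apply, RCLike.star_def, RCLike.ofReal_pow,
    ← RCLike.mul_conj]
  ring

theorem Finset.sum_mul_eq_mul_sum_iff {ι R : Type*} [Fintype ι] [DecidableEq ι]
    [CommSemiring R] (w : ι → R) (c : R) :
    (∀ d : ι → R, ∑ k, d k * w k = c * ∑ k, d k) ↔ ∀ k, w k = c := by
  constructor
  · intro h k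
    simpa [Pi.single_apply] using h (Pi.single k 1)
  · intro h d
    simp only [h, Finset.mul_sum, mul_comm]

theorem stmt2_general (N : ℕ) (u : Matrix (Fin N) (Fin N) ℂ) :
    (∀ d : Fin N → ℂ, ∀ i, (u * Matrix.diagonal d * uᴴ) i i = (N : ℂ)⁻¹ * ∑ k, d k) ↔
      ∀ i j, ‖u i j‖ ^ 2 = (N : ℝ)⁻¹ := by
  simp_rw [mul_diagonal_mul_conjTranspose_apply_self]
  rw [forall_comm]
  refine forall_congr' fun i => ?_
  rw [Finset.sum_mul_eq_mul_sum_iff, ← Complex.ofReal_natCast, ← Complex.ofReal_inv]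
  exact forall_congr' fun j => Complex.ofReal_inj

/-- For a unitary `u ∈ Mat_N(ℂ)`, the square of diagonal algebras `ℂ^N` and `u ℂ^N u*`
is a commuting square (the diagonal part of `u d u*` equals `tr(d)·I` for every diagonal `d`)
iff all entries of `u` have modulus squared `1/N`, i.e. `u` is a complex Hadamard matrix
up to normalization. -/
theorem stmt2 (N : ℕ) (hN : 0 < N) (u : Matrix (Fin N) (Fin N) ℂ)
    (hu : u ∈ Matrix.unitaryGroup (Fin N) ℂ) :
    (∀ d : Fin N → ℂ, ∀ i, (u * Matrix.diagonal d * uᴴ) i i = (N : ℂ)⁻¹ * ∑ k, d k) ↔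
      ∀ i j, ‖u i j‖ ^ 2 = (N : ℝ)⁻¹ :=
  stmt2_general N u
end

section
/- Let B be a finite-dimensional C*-algebra with a faithful conditional expectation E : B → A onto a unital subalgebra A. If {u_i}_{i=1}^n and {v_j}_{j=1}^m are both right Pimsner–Popa bases for (B, E) — i.e., x = Σ_i u_i E(u_i* x) = Σ_j v_j E(v_j* x) for all x ∈ B — then Σ_{i=1}^n u_i u_i* = Σ_{j=1}^m v_j v_j*. In other words, the Watatani index element is independent of the choice of Pimsner–Popa basis. -/
/-- The Watatani index element is independent of the choice of right Pimsner–Popa basis: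
if `{u_i}` and `{v_j}` both satisfy `x = Σ u_i E(u_i* x)` for a star-preserving
conditional expectation `E`, then `Σ u_i u_i* = Σ v_j v_j*`. -/
theorem stmt13 {B : Type*} [Ring B] [StarRing B] [Algebra ℂ B]
    (E : B →ₗ[ℂ] B) (hEstar : ∀ x, E (star x) = star (E x))
    (n m : ℕ) (u : Fin n → B) (v : Fin m → B)
    (hu : ∀ x, ∑ i, u i * E (star (u i) * x) = x)
    (hv : ∀ x, ∑ j, v j * E (star (v j) * x) = x) :
    ∑ i, u i * star (u i) = ∑ j, v j * star (v j) := by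
  have key : ∀ x : B, ∑ i, E (x * u i) * star (u i) = x := by
    intro x
    have h := congrArg star (hu (star x))
    rw [star_sum] at h
    simpa [star_mul, ← hEstar] using h
  calc ∑ i, u i * star (u i)
      = ∑ i, (∑ j, v j * E (star (v j) * u i)) * star (u i) := by
        refine Finset.sum_congr rfl fun i _ => ?_
        rw [hv (u i)]
    _ = ∑ j, v j * ∑ i, E (star (v j) * u i) * star (u i) := by
        simp_rw [Finset.sum_mul, Finset.mul_sum, mul_assoc]
        rw [Finset.sum_comm]
    _ = ∑ j, v j * star (v j) := by
        refine Finset.sum_congr rfl fun j _ => ?_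
        rw [key (star (v j))]
end
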